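/- (Theorem 1, high investment regime) Fix G > 0 and bandwidths B_i, B_j with min(B_i, B_j) ≥ G·e^{−1}. Then the zero price pair p_i* = p_j* = 0 is a Nash equilibrium of the high-SNR pricing game, and it is the unique Nash equilibrium; at this equilibrium each operator's revenue is 0, so for any leasing costs C_i, C_j > 0 both operators' profits R_i − B_i·C_i and R_j − B_j·C_j are negative. -/
import Mathlib


/-- Realized demand of the operator with own bandwidth `Bi` and own price `pi`,
facing a competitor with bandwidth `Bj` and price `pj`, in the high-SNR pricing
game with aggregate user characteristic `G`. -/
noncomputable def realizedDemand (G Bi Bj pi pj : ℝ) : ℝ :=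
  if pi < pj then min Bi (G * Real.exp (-(1 + pi)))
  else if pj < pi then
    (if G * Real.exp (-(1 + pj)) ≤ Bj then 0
     else min Bi ((G - Bj * Real.exp (1 + pj)) * Real.exp (-(1 + pi))))
  else min Bi (G * Real.exp (-(1 + pi)) / 2 + max (G * Real.exp (-(1 + pi)) / 2 - Bj) 0)

/-- `(pi, pj)` is a (pure) Nash equilibrium of the high-SNR pricing game. -/
def IsPricingNE (G Bi Bj pi pj : ℝ) : Prop :=
  0 ≤ pi ∧ 0 ≤ pj ∧
  (∀ p : ℝ, 0 ≤ p → p * realizedDemand G Bi Bj p pj ≤ pi * realizedDemand G Bi Bj pi pj) ∧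
  (∀ p : ℝ, 0 ≤ p → p * realizedDemand G Bj Bi p pi ≤ pj * realizedDemand G Bj Bi pj pi)

lemma expG_le {G p : ℝ} (hG : 0 < G) (hp : 0 ≤ p) :
    G * Real.exp (-(1 + p)) ≤ G * Real.exp (-1) :=
  mul_le_mul_of_nonneg_left (Real.exp_le_exp.mpr (by linarith)) hG.le

lemma dem_lt {G Bi Bj p q : ℝ} (hG : 0 < G) (hp : 0 ≤ p)
    (hBi : G * Real.exp (-1) ≤ Bi) (h : p < q) :
    realizedDemand G Bi Bj p q = G * Real.exp (-(1 + p)) := by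
  simp only [realizedDemand, if_pos h]
  exact min_eq_right ((expG_le hG hp).trans hBi)

lemma dem_gt {G Bi Bj p q : ℝ} (hG : 0 < G) (hq : 0 ≤ q)
    (hBj : G * Real.exp (-1) ≤ Bj) (h : q < p) :
    realizedDemand G Bi Bj p q = 0 := by
  simp only [realizedDemand, if_neg (not_lt.mpr h.le), if_pos h]
  rw [if_pos ((expG_le hG hq).trans hBj)]

lemma dem_eq {G Bi Bj p : ℝ} (hG : 0 < G) (hp : 0 ≤ p)
    (hBi : G * Real.exp (-1) ≤ Bi) (hBj : G * Real.exp (-1) ≤ Bj) :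
    realizedDemand G Bi Bj p p = G * Real.exp (-(1 + p)) / 2 := by
  simp only [realizedDemand, lt_irrefl, if_false]
  have he := expG_le hG hp
  have hpos : 0 < G * Real.exp (-(1 + p)) := by positivity
  rw [max_eq_right (by linarith), add_zero]
  exact min_eq_right (by linarith)

lemma key {G Bi Bj pi pj : ℝ} (hG : 0 < G) (hBi : G * Real.exp (-1) ≤ Bi)
    (hBj : G * Real.exp (-1) ≤ Bj) (h : IsPricingNE G Bi Bj pi pj) : pi = 0 := by
  obtain ⟨hpi, hpj, hi, hj⟩ := h
  by_contra hne
  have hpi' : 0 < pi := hpi.lt_of_ne (Ne.symm hne)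
  rcases lt_trichotomy pj pi with hlt | heq | hgt
  · rcases eq_or_lt_of_le hpj with h0 | hpj'
    · -- pj = 0, j deviates to pi/2
      have hdev := hj (pi / 2) (by linarith)
      rw [dem_lt hG (by linarith) hBj (by linarith),
          ← h0, zero_mul] at hdev
      have : 0 < pi / 2 * (G * Real.exp (-(1 + pi / 2))) := by positivity
      linarith
    · -- 0 < pj < pi, i deviates to pj/2
      have hdev := hi (pj / 2) (by linarith)
      rw [dem_lt hG (by linarith) hBi (by linarith),
          dem_gt hG hpj hBj hlt, mul_zero] at hdev
      have : 0 < pj / 2 * (G * Real.exp (-(1 + pj / 2))) := by positivity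
      linarith
  · -- pj = pi, j deviates to pi/2
    subst heq
    have hdev := hj (pj / 2) (by linarith)
    rw [dem_lt hG (by linarith) hBj (by linarith),
        dem_eq hG hpj hBj hBi] at hdev
    have he : Real.exp (-(1 + pj)) < Real.exp (-(1 + pj / 2)) :=
      Real.exp_lt_exp.mpr (by linarith)
    nlinarith [mul_pos (mul_pos (show (0:ℝ) < pj / 2 by linarith) hG)
      (sub_pos.mpr he)]
  · -- pi < pj, j deviates to pi/2
    have hdev := hj (pi / 2) (by linarith)
    rw [dem_lt hG (by linarith) hBj (by linarith),
        dem_gt hG hpi hBi hgt, mul_zero] at hdev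
    have : 0 < pi / 2 * (G * Real.exp (-(1 + pi / 2))) := by positivity
    linarith

lemma NE_swap {G Bi Bj pi pj : ℝ} (h : IsPricingNE G Bi Bj pi pj) :
    IsPricingNE G Bj Bi pj pi := ⟨h.2.1, h.1, h.2.2.2, h.2.2.1⟩

/-- Theorem 1, high investment regime (`min(Bi, Bj) ≥ G·e^{−1}`): the zero price
pair is the unique Nash equilibrium; each operator's revenue is `0`, so for any
positive leasing costs both operators' profits are negative. -/
theorem stmt_5 (G Bi Bj : ℝ) (hG : 0 < G) (hmin : G * Real.exp (-1) ≤ min Bi Bj) :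
    IsPricingNE G Bi Bj 0 0 ∧
    (∀ pi pj : ℝ, IsPricingNE G Bi Bj pi pj → pi = 0 ∧ pj = 0) ∧
    (0 : ℝ) * realizedDemand G Bi Bj 0 0 = 0 ∧
    (0 : ℝ) * realizedDemand G Bj Bi 0 0 = 0 ∧
    (∀ Ci Cj : ℝ, 0 < Ci → 0 < Cj →
      0 * realizedDemand G Bi Bj 0 0 - Bi * Ci < 0 ∧
      0 * realizedDemand G Bj Bi 0 0 - Bj * Cj < 0) := by
  have hBi : G * Real.exp (-1) ≤ Bi := hmin.trans (min_le_left _ _)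
  have hBj : G * Real.exp (-1) ≤ Bj := hmin.trans (min_le_right _ _)
  have hBi0 : 0 < Bi := lt_of_lt_of_le (by positivity) hBi
  have hBj0 : 0 < Bj := lt_of_lt_of_le (by positivity) hBj
  have hNE : IsPricingNE G Bi Bj 0 0 := by
    refine ⟨le_refl 0, le_refl 0, ?_, ?_⟩
    · intro p hp
      rcases eq_or_lt_of_le hp with h0 | h0
      · rw [← h0]
      · rw [dem_gt hG le_rfl hBj h0, mul_zero, zero_mul]
    · intro p hp
      rcases eq_or_lt_of_le hp with h0 | h0
      · rw [← h0]
      · rw [dem_gt hG le_rfl hBi h0, mul_zero, zero_mul]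
  refine ⟨hNE, ?_, zero_mul _, zero_mul _, ?_⟩
  · intro pi pj h
    exact ⟨key hG hBi hBj h, key hG hBj hBi (NE_swap h)⟩
  · intro Ci Cj hCi hCj
    constructor <;> [nlinarith; nlinarith]
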